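/- arXiv:1608.06749 — 4 statements merged into one kernel-verified Lean document; each statement's English description precedes it below -/
import Mathlib

section
/- Let a > 0, b > 0, c > 0. The function N(p) = a·(1 + c·p)·ln(1 + c·p) − c·(a·p + b) satisfies N(p) → −b·c < 0 as p → 0⁺ and N(p) → +∞ as p → +∞; consequently there exists a unique p* > 0 with N(p*) = 0, and moreover N(p) < 0 for all 0 < p < p* and N(p) > 0 for all p > p*. -/
/-!
Since `N'(p) = a c log (1 + c p) > 0` for `p > 0`, `N` increases strictly on `[0, ∞)` from
`N 0 = -b c < 0`, and `N(p) = a u (log u - 1) + a - b c` with `u = 1 + c p` tends to `+∞`.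
The intermediate value theorem gives the root; strict monotonicity gives its uniqueness and the
sign pattern.
-/

open Real Filter Set Topology

theorem exists_root_of_strictMonoOn_Ici {f : ℝ → ℝ} {x₀ : ℝ} (hcont : ContinuousOn f (Ici x₀))
    (hmono : StrictMonoOn f (Ici x₀)) (hx₀ : f x₀ < 0) (htop : Tendsto f atTop atTop) :
    ∃ x, x₀ < x ∧ f x = 0 ∧ (∀ y, x₀ ≤ y → f y = 0 → y = x) ∧
      (∀ y, x₀ ≤ y → y < x → f y < 0) ∧ (∀ y, x < y → 0 < f y) := by
  obtain ⟨M, hfM, hx₀M⟩ :=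
    ((htop.eventually (eventually_gt_atTop 0)).and (eventually_ge_atTop x₀)).exists
  obtain ⟨x, hx, hfx⟩ :=
    intermediate_value_Icc hx₀M (hcont.mono Icc_subset_Ici_self) ⟨hx₀.le, hfM.le⟩
  have hx₀x : x₀ < x := hx.1.lt_of_ne (by rintro rfl; linarith)
  refine ⟨x, hx₀x, hfx, fun y hy hfy => hmono.injOn hy hx.1 (hfy.trans hfx.symm), ?_, ?_⟩
  · intro y hy hyx
    simpa [hfx] using hmono hy hx.1 hyx
  · intro y hxy
    simpa [hfx] using hmono hx.1 (hx.1.trans hxy.le) hxy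

/-- The function `N` of the statement. -/
noncomputable def powerCostNumerator (a b c p : ℝ) : ℝ :=
  a * (1 + c * p) * log (1 + c * p) - c * (a * p + b)

section powerCostNumerator

variable {a b c : ℝ}

theorem powerCostNumerator_zero : powerCostNumerator a b c 0 = -(b * c) := by
  simp [powerCostNumerator, mul_comm]

theorem continuous_powerCostNumerator : Continuous (powerCostNumerator a b c) := by
  have hu : Continuous fun p => 1 + c * p := by fun_prop
  have h := ((continuous_mul_log.comp hu).const_mul a).sub
    (by fun_prop : Continuous fun p => c * (a * p + b))
  refine h.congr fun p => ?_
  simp only [powerCostNumerator, Pi.sub_apply, Function.comp_apply]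
  ring

theorem hasDerivAt_powerCostNumerator {x : ℝ} (hx : 1 + c * x ≠ 0) :
    HasDerivAt (powerCostNumerator a b c) (a * c * log (1 + c * x)) x := by
  have hu : HasDerivAt (fun p => 1 + c * p) c x := by
    simpa using ((hasDerivAt_id x).const_mul c).const_add 1
  have hN := ((hu.const_mul a).mul (hu.log hx)).sub
    (((hasDerivAt_id x).const_mul a).add_const b |>.const_mul c)
  refine hN.congr_deriv ?_
  field_simp
  ring

theorem strictMonoOn_powerCostNumerator (ha : 0 < a) (hc : 0 < c) :
    StrictMonoOn (powerCostNumerator a b c) (Ici 0) := by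
  refine strictMonoOn_of_deriv_pos (convex_Ici 0) continuous_powerCostNumerator.continuousOn
    fun x hx => ?_
  rw [interior_Ici] at hx
  have hu : 1 < 1 + c * x := by nlinarith [mem_Ioi.mp hx]
  rw [(hasDerivAt_powerCostNumerator (by linarith)).deriv]
  have := log_pos hu
  positivity

theorem tendsto_powerCostNumerator_nhdsGT_zero :
    Tendsto (powerCostNumerator a b c) (𝓝[>] 0) (𝓝 (-(b * c))) := by
  rw [← powerCostNumerator_zero]
  exact continuous_powerCostNumerator.continuousWithinAt.tendsto

theorem tendsto_powerCostNumerator_atTop (ha : 0 < a) (hc : 0 < c) :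
    Tendsto (powerCostNumerator a b c) atTop atTop := by
  have hu : Tendsto (fun p => 1 + c * p) atTop atTop :=
    tendsto_atTop_add_const_left _ 1 (tendsto_id.const_mul_atTop hc)
  have hlog : Tendsto (fun p => log (1 + c * p) - 1) atTop atTop :=
    tendsto_atTop_add_const_right _ (-1) (tendsto_log_atTop.comp hu)
  refine (tendsto_atTop_add_const_right _ (a - b * c)
    ((hu.atTop_mul_atTop₀ hlog).const_mul_atTop ha)).congr fun p => ?_
  simp only [powerCostNumerator]
  ring

end powerCostNumerator

/-- `N(p) = a·(1 + c·p)·ln(1 + c·p) − c·(a·p + b)` tends to `−b·c < 0`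
as `p → 0⁺`, tends to `+∞` as `p → +∞`, and has a unique positive root `p*`, with
`N < 0` on `(0, p*)` and `N > 0` on `(p*, ∞)`. -/
theorem stmt_2 (a b c : ℝ) (ha : 0 < a) (hb : 0 < b) (hc : 0 < c) :
    Tendsto (fun p : ℝ => a * (1 + c * p) * Real.log (1 + c * p) - c * (a * p + b))
        (nhdsWithin 0 (Set.Ioi 0)) (nhds (-(b * c))) ∧
    -(b * c) < 0 ∧
    Tendsto (fun p : ℝ => a * (1 + c * p) * Real.log (1 + c * p) - c * (a * p + b))
        atTop atTop ∧
    ∃ pstar : ℝ, 0 < pstar ∧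
      a * (1 + c * pstar) * Real.log (1 + c * pstar) - c * (a * pstar + b) = 0 ∧
      (∀ q : ℝ, 0 < q →
          a * (1 + c * q) * Real.log (1 + c * q) - c * (a * q + b) = 0 → q = pstar) ∧
      (∀ p : ℝ, 0 < p → p < pstar →
          a * (1 + c * p) * Real.log (1 + c * p) - c * (a * p + b) < 0) ∧
      (∀ p : ℝ, pstar < p →
          0 < a * (1 + c * p) * Real.log (1 + c * p) - c * (a * p + b)) := by
  have hbc : -(b * c) < 0 := by nlinarith
  obtain ⟨pstar, hpos, hroot, huniq, hneg, hposit⟩ :=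
    exists_root_of_strictMonoOn_Ici continuous_powerCostNumerator.continuousOn
      (strictMonoOn_powerCostNumerator ha hc) (by rwa [powerCostNumerator_zero])
      (tendsto_powerCostNumerator_atTop ha hc)
  exact ⟨tendsto_powerCostNumerator_nhdsGT_zero, hbc, tendsto_powerCostNumerator_atTop ha hc,
    pstar, hpos, hroot, fun q hq => huniq q hq.le, fun p hp => hneg p hp.le, hposit⟩
end

section
/- Let J be a nonempty finite index set and let a > 0, b > 0, W > 0, and r_j > 0, c_j > 0 for each j ∈ J. For the power-cost function g(p) = Σ_{j∈J} r_j·(a·p + b)/(W·log₂(1 + c_j·p)), there exists δ > 0 such that g is strictly decreasing on (0, δ), and there exists P > 0 such that g is strictly increasing on (P, ∞). -/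
/-!
Up to the positive factor `r_j log 2 / W`, each summand is `(a p + b) / log (1 + c p)`, whose
derivative has the sign of `N(p) = a log (1 + c p) - c (a p + b) / (1 + c p)`. Since `N` is
continuous with `N(0) = -c b < 0`, every summand strictly decreases near `0`; since the second term
of `N` stays below `a + b c` while the logarithm is unbounded, every summand strictly increases for
large `p`. Finitely many summands then share a common interval of each kind.
-/

open Real Set

section FinsetSum

open Finset

theorem StrictAntiOn.finset_sum {ι α β : Type*} [Preorder α] [AddCommMonoid β] [PartialOrder β]
    [IsOrderedCancelAddMonoid β] {s : Finset ι} (hs : s.Nonempty) {f : ι → α → β} {t : Set α}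
    (hf : ∀ i ∈ s, StrictAntiOn (f i) t) : StrictAntiOn (fun x => ∑ i ∈ s, f i x) t :=
  fun _ hx _ hy hxy => sum_lt_sum_of_nonempty hs fun i hi => hf i hi hx hy hxy

theorem StrictMonoOn.finset_sum {ι α β : Type*} [Preorder α] [AddCommMonoid β] [PartialOrder β]
    [IsOrderedCancelAddMonoid β] {s : Finset ι} (hs : s.Nonempty) {f : ι → α → β} {t : Set α}
    (hf : ∀ i ∈ s, StrictMonoOn (f i) t) : StrictMonoOn (fun x => ∑ i ∈ s, f i x) t :=
  fun _ hx _ hy hxy => sum_lt_sum_of_nonempty hs fun i hi => hf i hi hx hy hxy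

variable {J : Type*} [Fintype J] [Nonempty J] {f : J → ℝ → ℝ}

theorem exists_strictAntiOn_Ioo_sum (hf : ∀ j, ∃ δ, 0 < δ ∧ StrictAntiOn (f j) (Ioo 0 δ)) :
    ∃ δ, 0 < δ ∧ StrictAntiOn (fun p => ∑ j, f j p) (Ioo 0 δ) := by
  choose δ hδ hanti using hf
  refine ⟨univ.inf' univ_nonempty δ, (lt_inf'_iff _).2 fun j _ => hδ j, ?_⟩
  exact StrictAntiOn.finset_sum univ_nonempty fun j _ =>
    (hanti j).mono (Ioo_subset_Ioo_right (inf'_le _ (mem_univ j)))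

theorem exists_strictMonoOn_Ioi_sum (hf : ∀ j, ∃ P, 0 < P ∧ StrictMonoOn (f j) (Ioi P)) :
    ∃ P, 0 < P ∧ StrictMonoOn (fun p => ∑ j, f j p) (Ioi P) := by
  choose P hP hmono using hf
  obtain ⟨j₀⟩ := ‹Nonempty J›
  refine ⟨univ.sup' univ_nonempty P, (hP j₀).trans_le (le_sup' _ (mem_univ j₀)), ?_⟩
  exact StrictMonoOn.finset_sum univ_nonempty fun j _ =>
    (hmono j).mono (Ioi_subset_Ioi (le_sup' _ (mem_univ j)))

end FinsetSum

section AffineDivLog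

variable {a b c : ℝ}

theorem hasDerivAt_affine_div_log {p : ℝ} (hp : 1 + c * p ≠ 0) (hlog : log (1 + c * p) ≠ 0) :
    HasDerivAt (fun p => (a * p + b) / log (1 + c * p))
      ((a * log (1 + c * p) - c * (a * p + b) / (1 + c * p)) / log (1 + c * p) ^ 2) p := by
  have hinner : HasDerivAt (fun p => 1 + c * p) c p := by
    simpa using ((hasDerivAt_id p).const_mul c).const_add 1
  have hnum : HasDerivAt (fun p => a * p + b) a p := by
    simpa using ((hasDerivAt_id p).const_mul a).add_const b
  refine (hnum.div (hinner.log hp) hlog).congr_deriv ?_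
  ring

theorem log_one_add_mul_pos (hc : 0 < c) {p : ℝ} (hp : 0 < p) : 0 < log (1 + c * p) :=
  log_pos (by linarith [mul_pos hc hp])

theorem hasDerivAt_affine_div_log_of_pos (hc : 0 < c) {p : ℝ} (hp : 0 < p) :
    HasDerivAt (fun p => (a * p + b) / log (1 + c * p))
      ((a * log (1 + c * p) - c * (a * p + b) / (1 + c * p)) / log (1 + c * p) ^ 2) p :=
  hasDerivAt_affine_div_log (by linarith [mul_pos hc hp]) (log_one_add_mul_pos hc hp).ne'

theorem strictAntiOn_affine_div_log (hc : 0 < c) {s : Set ℝ} (hs : Convex ℝ s) (hs₀ : s ⊆ Ioi 0)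
    (hN : ∀ p ∈ s, a * log (1 + c * p) - c * (a * p + b) / (1 + c * p) < 0) :
    StrictAntiOn (fun p => (a * p + b) / log (1 + c * p)) s := by
  have hderiv := fun p (hp : p ∈ s) =>
    hasDerivAt_affine_div_log_of_pos (a := a) (b := b) hc (hs₀ hp)
  refine strictAntiOn_of_hasDerivWithinAt_neg hs
    (fun p hp => (hderiv p hp).continuousAt.continuousWithinAt)
    (fun p hp => (hderiv p (interior_subset hp)).hasDerivWithinAt) fun p hp => ?_
  have hp := interior_subset hp
  exact div_neg_of_neg_of_pos (hN p hp) (pow_pos (log_one_add_mul_pos hc (hs₀ hp)) 2)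

theorem strictMonoOn_affine_div_log (hc : 0 < c) {s : Set ℝ} (hs : Convex ℝ s) (hs₀ : s ⊆ Ioi 0)
    (hN : ∀ p ∈ s, 0 < a * log (1 + c * p) - c * (a * p + b) / (1 + c * p)) :
    StrictMonoOn (fun p => (a * p + b) / log (1 + c * p)) s := by
  have hderiv := fun p (hp : p ∈ s) =>
    hasDerivAt_affine_div_log_of_pos (a := a) (b := b) hc (hs₀ hp)
  refine strictMonoOn_of_hasDerivWithinAt_pos hs
    (fun p hp => (hderiv p hp).continuousAt.continuousWithinAt)
    (fun p hp => (hderiv p (interior_subset hp)).hasDerivWithinAt) fun p hp => ?_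
  have hp := interior_subset hp
  exact div_pos (hN p hp) (pow_pos (log_one_add_mul_pos hc (hs₀ hp)) 2)

theorem exists_strictAntiOn_Ioo_affine_div_log (hb : 0 < b) (hc : 0 < c) :
    ∃ δ, 0 < δ ∧ StrictAntiOn (fun p => (a * p + b) / log (1 + c * p)) (Ioo 0 δ) := by
  have hcont : ContinuousAt
      (fun p => a * log (1 + c * p) - c * (a * p + b) / (1 + c * p)) 0 := by
    fun_prop (disch := norm_num)
  have hzero : a * log (1 + c * 0) - c * (a * 0 + b) / (1 + c * 0) < 0 := by
    simpa using mul_pos hc hb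
  obtain ⟨δ, hδ, hN⟩ := Metric.eventually_nhds_iff.1 (hcont.eventually_lt continuousAt_const hzero)
  refine ⟨δ, hδ, strictAntiOn_affine_div_log hc (convex_Ioo 0 δ) Ioo_subset_Ioi_self ?_⟩
  intro p ⟨hp, hpδ⟩
  exact hN (by rwa [dist_zero_right, norm_of_nonneg hp.le])

theorem exists_strictMonoOn_Ioi_affine_div_log (ha : 0 < a) (hb : 0 ≤ b) (hc : 0 < c) :
    ∃ P, 0 < P ∧ StrictMonoOn (fun p => (a * p + b) / log (1 + c * p)) (Ioi P) := by
  set M := (a + b * c) / a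
  have hM : 0 < M := by positivity
  have hP : 0 < (exp M - 1) / c := div_pos (by linarith [add_one_lt_exp hM.ne']) hc
  refine ⟨(exp M - 1) / c, hP, strictMonoOn_affine_div_log hc (convex_Ioi _)
    (Ioi_subset_Ioi hP.le) fun p (hp : _ < p) => ?_⟩
  have hp₀ : 0 < p := hP.trans hp
  have hlog : M < log (1 + c * p) := by
    rw [div_lt_iff₀ hc] at hp
    exact (lt_log_iff_exp_lt (by positivity)).2 (by linarith)
  have hlog' : a + b * c < a * log (1 + c * p) := by rwa [div_lt_iff₀' ha] at hlog
  have hfrac : c * (a * p + b) / (1 + c * p) ≤ a + b * c := by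
    rw [div_le_iff₀ (by positivity)]
    nlinarith [mul_nonneg (mul_nonneg hb (mul_nonneg hc.le hc.le)) hp₀.le]
  linarith

end AffineDivLog

/-- the power-cost function
`g(p) = Σ_{j∈J} r_j·(a·p + b)/(W·log₂(1 + c_j·p))` is strictly decreasing on some
interval `(0, δ)` and strictly increasing on some interval `(P, ∞)`. -/
theorem stmt_5 {J : Type*} [Fintype J] [Nonempty J]
    (a b W : ℝ) (r c : J → ℝ)
    (ha : 0 < a) (hb : 0 < b) (hW : 0 < W)
    (hr : ∀ j, 0 < r j) (hc : ∀ j, 0 < c j) :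
    (∃ δ : ℝ, 0 < δ ∧
      StrictAntiOn (fun p : ℝ => ∑ j, r j * (a * p + b) / (W * Real.logb 2 (1 + c j * p)))
        (Set.Ioo 0 δ)) ∧
    (∃ P : ℝ, 0 < P ∧
      StrictMonoOn (fun p : ℝ => ∑ j, r j * (a * p + b) / (W * Real.logb 2 (1 + c j * p)))
        (Set.Ioi P)) := by
  have hsummand : ∀ j, (fun p => r j * (a * p + b) / (W * logb 2 (1 + c j * p))) =
      fun p => r j * log 2 / W * ((a * p + b) / log (1 + c j * p)) := fun j => by
    funext p
    simp only [logb, div_eq_mul_inv, mul_inv, inv_inv]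
    ring
  have hscale : ∀ j, 0 < r j * log 2 / W := fun j =>
    div_pos (mul_pos (hr j) (log_pos one_lt_two)) hW
  constructor
  · refine exists_strictAntiOn_Ioo_sum fun j => ?_
    obtain ⟨δ, hδ, hanti⟩ := exists_strictAntiOn_Ioo_affine_div_log (a := a) hb (hc j)
    exact ⟨δ, hδ, hsummand j ▸ (strictMono_mul_left_of_pos (hscale j)).comp_strictAntiOn hanti⟩
  · refine exists_strictMonoOn_Ioi_sum fun j => ?_
    obtain ⟨P, hP, hmono⟩ := exists_strictMonoOn_Ioi_affine_div_log ha hb.le (hc j)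
    exact ⟨P, hP, hsummand j ▸ (strictMono_mul_left_of_pos (hscale j)).comp_strictMonoOn hmono⟩
end

section
/- Let J be a nonempty finite index set and let a > 0, W > 0, and r_j > 0, c_j > 0 for each j ∈ J. Then the wireless-transmission-power function g₀(p) = Σ_{j∈J} r_j·a·p/(W·log₂(1 + c_j·p)) is strictly increasing on (0, ∞): for all 0 < p₁ < p₂ one has g₀(p₁) < g₀(p₂). -/
open Real

lemma key_log_ineq {c p₁ p₂ : ℝ} (hc : 0 < c) (h1 : 0 < p₁) (h12 : p₁ < p₂) :
    p₁ * Real.log (1 + c * p₂) < p₂ * Real.log (1 + c * p₁) := by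
  have hp2 : 0 < p₂ := h1.trans h12
  have ht : 0 < p₁ / p₂ := div_pos h1 hp2
  have ht1 : p₁ / p₂ < 1 := (div_lt_one hp2).mpr h12
  have hx : (1 + c * p₂) ∈ Set.Ioi (0:ℝ) := by
    simp; nlinarith
  have hy : (1:ℝ) ∈ Set.Ioi (0:ℝ) := by simp
  have hne : (1 + c * p₂) ≠ 1 := by nlinarith
  have h2 : (0:ℝ) < 1 - p₁/p₂ := by linarith
  have hs : p₁/p₂ + (1 - p₁/p₂) = 1 := by ring
  have := strictConcaveOn_log_Ioi.2 hx hy hne ht h2 hs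
  simp only [smul_eq_mul, Real.log_one, mul_zero, mul_one, add_zero] at this
  have heq : p₁ / p₂ * (1 + c * p₂) + (1 - p₁ / p₂) = 1 + c * p₁ := by
    field_simp; ring
  rw [heq] at this
  have := (mul_lt_mul_iff_right₀ hp2).mpr this
  calc p₁ * Real.log (1 + c * p₂) = p₂ * (p₁ / p₂ * Real.log (1 + c * p₂)) := by
        field_simp
    _ < p₂ * Real.log (1 + c * p₁) := this

/-- the wireless-transmission-power function
`g₀(p) = Σ_{j∈J} r_j·a·p/(W·log₂(1 + c_j·p))` is strictly increasing on `(0, ∞)`. -/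
theorem stmt_7 {J : Type*} [Fintype J] [Nonempty J]
    (a W : ℝ) (r c : J → ℝ)
    (ha : 0 < a) (hW : 0 < W)
    (hr : ∀ j, 0 < r j) (hc : ∀ j, 0 < c j) :
    ∀ p₁ p₂ : ℝ, 0 < p₁ → p₁ < p₂ →
      (∑ j, r j * a * p₁ / (W * Real.logb 2 (1 + c j * p₁))) <
        ∑ j, r j * a * p₂ / (W * Real.logb 2 (1 + c j * p₂)) := by
  intro p₁ p₂ h1 h12
  have hp2 : 0 < p₂ := h1.trans h12
  apply Finset.sum_lt_sum_of_nonempty Finset.univ_nonempty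
  intro j _
  have hL1 : 0 < Real.log (1 + c j * p₁) := by
    apply Real.log_pos; nlinarith [hc j]
  have hL2 : 0 < Real.log (1 + c j * p₂) := by
    apply Real.log_pos; nlinarith [hc j]
  have hb1 : 0 < Real.logb 2 (1 + c j * p₁) := by
    rw [Real.logb]; positivity
  have hb2 : 0 < Real.logb 2 (1 + c j * p₂) := by
    rw [Real.logb]; positivity
  rw [div_lt_div_iff₀ (by positivity) (by positivity)]
  have hkey := key_log_ineq (hc j) h1 h12
  have hlog2 : 0 < Real.log 2 := Real.log_pos (by norm_num)
  simp only [Real.logb]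
  rw [div_eq_mul_inv, div_eq_mul_inv]
  have hinv : 0 < (Real.log 2)⁻¹ := by positivity
  nlinarith [mul_pos (mul_pos (hr j) ha) hW, mul_pos hlog2 hinv,
    mul_lt_mul_of_pos_left hkey (mul_pos (mul_pos (mul_pos (hr j) ha) hW) hinv)]
end

section
/- (Proposition 1, single-RRH form.) Let J be a nonempty finite index set and let a > 0, W > 0, and r_j > 0, c_j > 0 for each j ∈ J. Let p̂ > 0 be the unique power with x(p̂) = 1, where x(p) = Σ_{j∈J} r_j/(W·log₂(1 + c_j·p)). Then for every p > 0 with x(p) ≤ 1 one has a·p·x(p) ≥ a·p̂·x(p̂), with equality if and only if p = p̂. In other words, when only wireless transmission power is considered, the minimum power subject to the load constraint x(p) ≤ 1 is attained exactly at full load x(p) = 1. -/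
/-!
Each term of the load satisfies `p · r / (W log₂(1 + c p)) = (r log 2 / W) / (log(1 + c p) / p)`,
and `log(1 + c p) / p` is a secant slope of the strictly concave `log` through the point `1`,
hence strictly decreasing in `p`. So the power `p · x(p)` is strictly increasing, while the
load `x(p)` is strictly decreasing; the constraint `x(p) ≤ 1 = x(p̂)` thus forces `p ≥ p̂`,
and the power is minimal exactly at `p = p̂`.
-/

open Real Set

theorem strictAntiOn_log_one_add_mul_div {c : ℝ} (hc : 0 < c) :
    StrictAntiOn (fun p => log (1 + c * p) / p) (Ioi 0) := by
  intro q hq p hp hqp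
  have hq' : (0 : ℝ) < q := hq
  have hp' : (0 : ℝ) < p := hp
  have hcq : 1 < 1 + c * q := lt_add_of_pos_right 1 (mul_pos hc hq')
  have hcp : 1 < 1 + c * p := lt_add_of_pos_right 1 (mul_pos hc hp')
  have hslope := strictConcaveOn_log_Ioi.secant_strict_mono (a := 1) (mem_Ioi.2 one_pos)
    (mem_Ioi.2 (one_pos.trans hcq)) (mem_Ioi.2 (one_pos.trans hcp)) hcq.ne' hcp.ne' (by gcongr)
  simp only [log_one, sub_zero, add_sub_cancel_left] at hslope
  have hscale : ∀ x > (0 : ℝ), log (1 + c * x) / x = c * (log (1 + c * x) / (c * x)) := by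
    intro x hx
    field_simp
  dsimp only
  rw [hscale p hp', hscale q hq']
  exact mul_lt_mul_of_pos_left hslope hc

theorem logb_one_add_mul_pos {b c p : ℝ} (hb : 1 < b) (hc : 0 < c) (hp : 0 < p) :
    0 < logb b (1 + c * p) :=
  logb_pos hb (by nlinarith)

section Load

variable {J : Type*} [Fintype J] (W : ℝ) (r c : J → ℝ)

noncomputable def load (p : ℝ) : ℝ :=
  ∑ j, r j / (W * logb 2 (1 + c j * p))

variable {W r c}

theorem load_strictAntiOn [Nonempty J] (hW : 0 < W) (hr : ∀ j, 0 < r j) (hc : ∀ j, 0 < c j) :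
    StrictAntiOn (load W r c) (Ioi 0) := by
  intro q hq p _ hqp
  refine Finset.sum_lt_sum_of_nonempty Finset.univ_nonempty fun j _ => ?_
  have hlogb_q := logb_one_add_mul_pos one_lt_two (hc j) hq
  refine div_lt_div_of_pos_left (hr j) (by positivity) ?_
  have hcj := hc j
  have hq' : (0 : ℝ) < q := hq
  gcongr
  exact one_lt_two

theorem mul_load_strictMonoOn [Nonempty J] (hW : 0 < W) (hr : ∀ j, 0 < r j)
    (hc : ∀ j, 0 < c j) : StrictMonoOn (fun p => p * load W r c p) (Ioi 0) := by
  intro q hq p hp hqp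
  have hq' : (0 : ℝ) < q := hq
  have hp' : (0 : ℝ) < p := hp
  simp only [load, Finset.mul_sum]
  refine Finset.sum_lt_sum_of_nonempty Finset.univ_nonempty fun j _ => ?_
  have hterm : ∀ x > (0 : ℝ), x * (r j / (W * logb 2 (1 + c j * x))) =
      r j * log 2 / W / (log (1 + c j * x) / x) := by
    intro x hx
    rw [logb]
    field_simp
  have hlog_p : 0 < log (1 + c j * p) := log_pos (by nlinarith [hc j])
  rw [hterm q hq', hterm p hp']
  exact div_lt_div_of_pos_left (by have := hr j; positivity) (by positivity)
    (strictAntiOn_log_one_add_mul_div (hc j) hq hp hqp)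

end Load

/-- Proposition 1, single-RRH form: with
`x(p) = Σ_{j∈J} r_j/(W·log₂(1 + c_j·p))` and `p̂ > 0` the full-load power
(`x(p̂) = 1`), for every `p > 0` with `x(p) ≤ 1` one has
`a·p·x(p) ≥ a·p̂·x(p̂)`, with equality iff `p = p̂`. -/
theorem stmt_9 {J : Type*} [Fintype J] [Nonempty J]
    (a W : ℝ) (r c : J → ℝ)
    (ha : 0 < a) (hW : 0 < W)
    (hr : ∀ j, 0 < r j) (hc : ∀ j, 0 < c j)
    (phat : ℝ) (hphat : 0 < phat)
    (hfull : (∑ j, r j / (W * Real.logb 2 (1 + c j * phat))) = 1) :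
    ∀ p : ℝ, 0 < p → (∑ j, r j / (W * Real.logb 2 (1 + c j * p))) ≤ 1 →
      (a * phat * ∑ j, r j / (W * Real.logb 2 (1 + c j * phat))) ≤
        (a * p * ∑ j, r j / (W * Real.logb 2 (1 + c j * p))) ∧
      ((a * p * ∑ j, r j / (W * Real.logb 2 (1 + c j * p))) =
          (a * phat * ∑ j, r j / (W * Real.logb 2 (1 + c j * phat))) ↔ p = phat) := by
  intro p hp hle
  change load W r c phat = 1 at hfull
  change load W r c p ≤ 1 at hle
  change a * phat * load W r c phat ≤ a * p * load W r c p ∧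
    (a * p * load W r c p = a * phat * load W r c phat ↔ p = phat)
  have hphat_le : phat ≤ p :=
    (load_strictAntiOn hW hr hc).le_iff_ge hp hphat |>.1 (hfull ▸ hle)
  have hpower : StrictMonoOn (fun p => a * p * load W r c p) (Ioi 0) := fun q hq p hp hqp => by
    simpa only [mul_assoc] using mul_lt_mul_of_pos_left (mul_load_strictMonoOn hW hr hc hq hp hqp) ha
  exact ⟨(hpower.le_iff_le hphat hp).2 hphat_le, hpower.injOn.eq_iff hp hphat⟩
end
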